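/- Let (P,O) be a T-labelled poset and let Q and R be finite convex subsets of P. Then the cell transfer map η : A(Q,O) × A(R,O) → A(Q ∧ R, O) × A(Q ∨ R, O), defined by η(ω,σ) = ((ω ∧ σ)_{S◇}, (ω ∨ σ)_{S◇}) where S◇ = S◇(ω,σ) is the unique smallest transferrable subset of S*, is injective. -/
import Mathlib


variable {P : Type*} [PartialOrder P]

/-- `s < Q`: `s ∉ Q` and `s < t` for some `t ∈ Q`. -/
def ltSet (s : P) (Q : Set P) : Prop := s ∉ Q ∧ ∃ t ∈ Q, s < t

/-- `s > Q`: `s ∉ Q` and `t < s` for some `t ∈ Q`. -/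
def gtSet (s : P) (Q : Set P) : Prop := s ∉ Q ∧ ∃ t ∈ Q, t < s

/-- `s ∼ Q`: `s ∈ Q` or `s` is incomparable with every element of `Q`. -/
def simSet (s : P) (Q : Set P) : Prop := s ∈ Q ∨ ∀ t ∈ Q, ¬ s ≤ t ∧ ¬ t ≤ s

/-- A convex subset of a poset: closed under taking intervals. -/
def IsConvex (Q : Set P) : Prop := ∀ ⦃s r t : P⦄, s ∈ Q → t ∈ Q → s ≤ r → r ≤ t → r ∈ Q

/-- `Q ∧ R = {s ∈ R | s < Q} ∪ {s ∈ Q | s ∼ R or s < R}`. -/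
def wedgeSet (Q R : Set P) : Set P :=
  {s | s ∈ R ∧ ltSet s Q} ∪ {s | s ∈ Q ∧ (simSet s R ∨ ltSet s R)}

/-- `Q ∨ R = {s ∈ Q | s > R} ∪ {s ∈ R | s ∼ Q or s > Q}`. -/
def veeSet (Q R : Set P) : Set P :=
  {s | s ∈ Q ∧ gtSet s R} ∪ {s | s ∈ R ∧ (simSet s Q ∨ gtSet s Q)}

attribute [local instance] Classical.propDecidable

/-- Embedding of the positive integers `ℙ` (modelled as `ℕ+`) into `ℤ ∪ {∞}`. -/
def toWT (n : ℕ+) : WithTop ℤ := (((n : ℕ) : ℤ) : WithTop ℤ)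

/-- `ω : P → ℙ` respects the `𝕋`-labelling `O` on a (convex) subset `Q`:
for every covering relation `s ⋖ t` inside `Q` we have `ω(s) ≤ O(s,t)(ω(t))`.
(For a convex subposet, covering relations coincide with those of `P`.) -/
def IsTableau (O : P → P → ℕ+ → WithTop ℤ) (Q : Set P) (ω : P → ℕ+) : Prop :=
  ∀ ⦃s t : P⦄, s ∈ Q → t ∈ Q → s ⋖ t → toWT (ω s) ≤ O s t (ω t)

/-- The weight of a tableau on `Q`: `wt(ω)(n) = #ω⁻¹(n)`. -/
noncomputable def wtOn (Q : Set P) (ω : P → ℕ+) (n : ℕ+) : ℕ :=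
  Nat.card {x : Q // ω x = n}

/-- `(ω ∧ σ)_S`: equals `σ` on `(R \ Q) ∪ S` and `ω` elsewhere (relevant on `Q ∧ R`). -/
noncomputable def wedgeTab (Q R S : Set P) (ω σ : P → ℕ+) : P → ℕ+ :=
  fun x => if x ∈ (R \ Q) ∪ S then σ x else ω x

/-- `(ω ∨ σ)_S`: equals `ω` on `(Q \ R) ∪ S` and `σ` elsewhere (relevant on `Q ∨ R`). -/
noncomputable def veeTab (Q R S : Set P) (ω σ : P → ℕ+) : P → ℕ+ :=
  fun x => if x ∈ (Q \ R) ∪ S then ω x else σ x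

/-- `(Q ∩ R)⁺ = {x ∈ Q ∩ R | ω(x) < σ(x)}`. -/
def plusSet (Q R : Set P) (ω σ : P → ℕ+) : Set P := {x | x ∈ Q ∩ R ∧ ω x < σ x}

/-- Adjacency in the graph induced on `A` from the Hasse diagram of `P`. -/
def hasseAdj (A : Set P) (x y : P) : Prop := x ∈ A ∧ y ∈ A ∧ (x ⋖ y ∨ y ⋖ x)

/-- `bd(R) = {x ∈ Q ∩ R | x ⋗ y for some y ∈ R \ Q}`, the lower boundary. -/
def bdLower (Q R : Set P) : Set P := {x | x ∈ Q ∩ R ∧ ∃ y ∈ R \ Q, y ⋖ x}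

/-- `bd(Q) = {x ∈ Q ∩ R | x ⋖ y for some y ∈ Q \ R}`, the upper boundary. -/
def bdUpper (Q R : Set P) : Set P := {x | x ∈ Q ∩ R ∧ ∃ y ∈ Q \ R, x ⋖ y}

/-- The union of the connected components of `(Q ∩ R)⁺` meeting `B`. -/
def bdPlus (Q R : Set P) (ω σ : P → ℕ+) (B : Set P) : Set P :=
  {x | x ∈ plusSet Q R ω σ ∧
    ∃ y ∈ B, Relation.ReflTransGen (hasseAdj (plusSet Q R ω σ)) x y}

/-- `S* = bd(Q)⁺ ∪ bd(R)⁺`. -/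
def sStar (Q R : Set P) (ω σ : P → ℕ+) : Set P :=
  bdPlus Q R ω σ (bdUpper Q R) ∪ bdPlus Q R ω σ (bdLower Q R)

/-- `S ⊆ S*` is transferrable for `(ω,σ)` if both `(ω ∧ σ)_S` and `(ω ∨ σ)_S` respect `O`. -/
def Transferrable (O : P → P → ℕ+ → WithTop ℤ) (Q R : Set P) (ω σ : P → ℕ+)
    (S : Set P) : Prop :=
  S ⊆ sStar Q R ω σ ∧ IsTableau O (wedgeSet Q R) (wedgeTab Q R S ω σ) ∧
    IsTableau O (veeSet Q R) (veeTab Q R S ω σ)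

lemma toWT_mono {a b : ℕ+} (h : a ≤ b) : toWT a ≤ toWT b := by
  unfold toWT
  exact_mod_cast h

lemma mem_wedge_of_inter {Q R : Set P} {x : P} (hx : x ∈ Q ∩ R) : x ∈ wedgeSet Q R :=
  Or.inr ⟨hx.1, Or.inl (Or.inl hx.2)⟩

lemma mem_vee_of_inter {Q R : Set P} {x : P} (hx : x ∈ Q ∩ R) : x ∈ veeSet Q R :=
  Or.inr ⟨hx.2, Or.inl (Or.inl hx.1)⟩

lemma sStar_sub_plus {Q R : Set P} {ω σ : P → ℕ+} :
    sStar Q R ω σ ⊆ plusSet Q R ω σ := fun _ hx => hx.elim (fun h => h.1) (fun h => h.1)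

lemma wedge_mem_Q {Q R : Set P} {s : P} (hs : s ∈ wedgeSet Q R) (h : s ∉ R \ Q) : s ∈ Q := by
  rcases hs with ⟨hR, hnQ, _⟩ | ⟨hQ, _⟩
  · exact absurd ⟨hR, hnQ⟩ h
  · exact hQ

lemma vee_mem_R {Q R : Set P} {s : P} (hs : s ∈ veeSet Q R) (h : s ∉ Q \ R) : s ∈ R := by
  rcases hs with ⟨hQ, hnR, _⟩ | ⟨hR, _⟩
  · exact absurd ⟨hQ, hnR⟩ h
  · exact hR

/-- Key step: `S₀ ∩ S₀'` is transferrable for `(ω,σ)`, hence `S₀ ⊆ S₀'` by minimality. -/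
lemma key_sub (O : P → P → ℕ+ → WithTop ℤ)
    (hO : ∀ s t : P, s ⋖ t → Monotone (O s t))
    (Q R : Set P)
    (ω σ ω' σ' : P → ℕ+)
    (hω : IsTableau O Q ω) (hσ : IsTableau O R σ)
    (hω' : IsTableau O Q ω') (hσ' : IsTableau O R σ')
    (S₀ S₀' : Set P)
    (hS₀ : Transferrable O Q R ω σ S₀)
    (hS₀min : ∀ S : Set P, Transferrable O Q R ω σ S → S₀ ⊆ S)
    (hS₀' : Transferrable O Q R ω' σ' S₀')
    (hwedge : Set.EqOn (wedgeTab Q R S₀ ω σ) (wedgeTab Q R S₀' ω' σ') (wedgeSet Q R))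
    (hvee : Set.EqOn (veeTab Q R S₀ ω σ) (veeTab Q R S₀' ω' σ') (veeSet Q R)) :
    S₀ ⊆ S₀' := by
  classical
  set T := S₀ ∩ S₀' with hT
  -- basic membership facts
  have hSp : ∀ x ∈ S₀, x ∈ Q ∩ R ∧ ω x < σ x := fun x hx => sStar_sub_plus (hS₀.1 hx)
  have hSp' : ∀ x ∈ S₀', x ∈ Q ∩ R ∧ ω' x < σ' x := fun x hx => sStar_sub_plus (hS₀'.1 hx)
  have hwEq : ∀ x ∈ wedgeSet Q R,
      (if x ∈ R \ Q ∪ S₀ then σ x else ω x) = (if x ∈ R \ Q ∪ S₀' then σ' x else ω' x) :=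
    fun x hx => hwedge hx
  have hvEq : ∀ x ∈ veeSet Q R,
      (if x ∈ Q \ R ∪ S₀ then ω x else σ x) = (if x ∈ Q \ R ∪ S₀' then ω' x else σ' x) :=
    fun x hx => hvee hx
  -- derived value equalities
  have eσ : ∀ x ∈ wedgeSet Q R, x ∈ R \ Q ∪ T → σ x = σ' x := by
    intro x hx hxm
    have h := hwEq x hx
    have h1 : x ∈ R \ Q ∪ S₀ := hxm.imp id fun h => h.1
    have h2 : x ∈ R \ Q ∪ S₀' := hxm.imp id fun h => h.2
    rw [if_pos h1, if_pos h2] at h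
    exact h
  have eω : ∀ x ∈ veeSet Q R, x ∈ Q \ R ∪ T → ω x = ω' x := by
    intro x hx hxm
    have h := hvEq x hx
    have h1 : x ∈ Q \ R ∪ S₀ := hxm.imp id fun h => h.1
    have h2 : x ∈ Q \ R ∪ S₀' := hxm.imp id fun h => h.2
    rw [if_pos h1, if_pos h2] at h
    exact h
  have eE : ∀ x ∈ S₀, x ∉ S₀' → σ' x = ω x := by
    intro x hx hx'
    have hxQR := (hSp x hx).1
    have h := hvEq x (mem_vee_of_inter hxQR)
    have h1 : x ∈ Q \ R ∪ S₀ := Or.inr hx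
    have h2 : x ∉ Q \ R ∪ S₀' := by
      rintro (⟨_, hnr⟩ | hmem)
      · exact hnr hxQR.2
      · exact hx' hmem
    rw [if_pos h1, if_neg h2] at h
    exact h.symm
  have eE2 : ∀ x ∈ S₀, x ∉ S₀' → ω' x = σ x := by
    intro x hx hx'
    have hxQR := (hSp x hx).1
    have h := hwEq x (mem_wedge_of_inter hxQR)
    have h1 : x ∈ R \ Q ∪ S₀ := Or.inr hx
    have h2 : x ∉ R \ Q ∪ S₀' := by
      rintro (⟨_, hnq⟩ | hmem)
      · exact hnq hxQR.1
      · exact hx' hmem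
    rw [if_pos h1, if_neg h2] at h
    exact h.symm
  have hTR : ∀ x, x ∈ R \ Q ∪ T → x ∈ R := fun x hx => hx.elim (fun h => h.1)
    (fun h => ((hSp x h.1).1).2)
  have hTQ : ∀ x, x ∈ Q \ R ∪ T → x ∈ Q := fun x hx => hx.elim (fun h => h.1)
    (fun h => ((hSp x h.1).1).1)
  -- T is transferrable for (ω, σ)
  have htrans : Transferrable O Q R ω σ T := by
    refine ⟨fun x hx => hS₀.1 hx.1, ?_, ?_⟩
    · -- wedge tableau
      intro s t hs ht hst
      unfold wedgeTab
      by_cases hTt : t ∈ R \ Q ∪ T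
      · rw [if_pos hTt]
        by_cases hTs : s ∈ R \ Q ∪ T
        · rw [if_pos hTs]
          exact hσ (hTR s hTs) (hTR t hTt) hst
        · rw [if_neg hTs]
          -- use the tableau A = wedgeTab Q R S₀ ω σ
          have hA := hS₀.2.1 hs ht hst
          have hAt : wedgeTab Q R S₀ ω σ t = σ t := by
            unfold wedgeTab
            exact if_pos (show t ∈ R \ Q ∪ S₀ from hTt.imp id fun h => h.1)
          have hAs : toWT (ω s) ≤ toWT (wedgeTab Q R S₀ ω σ s) := by
            unfold wedgeTab
            by_cases h : s ∈ R \ Q ∪ S₀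
            · rw [if_pos h]
              rcases h with h | h
              · exact absurd (Or.inl h) hTs
              · exact toWT_mono (le_of_lt (hSp s h).2)
            · rw [if_neg h]
          rw [hAt] at hA
          exact le_trans hAs hA
      · rw [if_neg hTt]
        have htQ : t ∈ Q := wedge_mem_Q ht (fun h => hTt (Or.inl h))
        by_cases hTs : s ∈ R \ Q ∪ T
        · rw [if_pos hTs]
          by_cases htS : t ∈ S₀
          · -- t ∈ S₀ \ S₀' : use σ' tableau
            have htS' : t ∉ S₀' := fun h => hTt (Or.inr ⟨htS, h⟩)
            have h1 := hσ' (hTR s hTs) ((hSp t htS).1).2 hst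
            rw [eE t htS htS', ← eσ s hs hTs] at h1
            exact h1
          · -- use the tableau A
            have hA := hS₀.2.1 hs ht hst
            have hAt : wedgeTab Q R S₀ ω σ t = ω t := by
              unfold wedgeTab
              exact if_neg (by
                rintro (h | h)
                · exact hTt (Or.inl h)
                · exact htS h)
            have hAs : wedgeTab Q R S₀ ω σ s = σ s := by
              unfold wedgeTab
              exact if_pos (show s ∈ R \ Q ∪ S₀ from hTs.imp id fun h => h.1)
            rw [hAt, hAs] at hA
            exact hA
        · rw [if_neg hTs]
          exact hω (wedge_mem_Q hs (fun h => hTs (Or.inl h))) htQ hst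
    · -- vee tableau
      intro s t hs ht hst
      unfold veeTab
      by_cases hTs : s ∈ Q \ R ∪ T
      · rw [if_pos hTs]
        by_cases hTt : t ∈ Q \ R ∪ T
        · rw [if_pos hTt]
          exact hω (hTQ s hTs) (hTQ t hTt) hst
        · rw [if_neg hTt]
          have htR : t ∈ R := vee_mem_R ht (fun h => hTt (Or.inl h))
          -- use the tableau B = veeTab Q R S₀ ω σ
          have hB := hS₀.2.2 hs ht hst
          have hBs : veeTab Q R S₀ ω σ s = ω s := by
            unfold veeTab
            exact if_pos (show s ∈ Q \ R ∪ S₀ from hTs.imp id fun h => h.1)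
          have hBt : O s t (veeTab Q R S₀ ω σ t) ≤ O s t (σ t) := by
            unfold veeTab
            by_cases h : t ∈ Q \ R ∪ S₀
            · rw [if_pos h]
              rcases h with h | h
              · exact absurd (Or.inl h) hTt
              · exact hO s t hst (le_of_lt (hSp t h).2)
            · rw [if_neg h]
          rw [hBs] at hB
          exact le_trans hB hBt
      · rw [if_neg hTs]
        have hsR : s ∈ R := vee_mem_R hs (fun h => hTs (Or.inl h))
        by_cases hTt : t ∈ Q \ R ∪ T
        · rw [if_pos hTt]
          by_cases hsS : s ∈ S₀
          · -- s ∈ S₀ \ S₀' : use ω' tableau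
            have hsS' : s ∉ S₀' := fun h => hTs (Or.inr ⟨hsS, h⟩)
            have h1 := hω' ((hSp s hsS).1).1 (hTQ t hTt) hst
            rw [eE2 s hsS hsS', ← eω t ht hTt] at h1
            exact h1
          · -- use the tableau B
            have hB := hS₀.2.2 hs ht hst
            have hBs : veeTab Q R S₀ ω σ s = σ s := by
              unfold veeTab
              exact if_neg (by
                rintro (h | h)
                · exact h.2 hsR
                · exact hsS h)
            have hBt : veeTab Q R S₀ ω σ t = ω t := by
              unfold veeTab
              exact if_pos (show t ∈ Q \ R ∪ S₀ from hTt.imp id fun h => h.1)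
            rw [hBs, hBt] at hB
            exact hB
        · rw [if_neg hTt]
          exact hσ hsR (vee_mem_R ht (fun h => hTt (Or.inl h))) hst
  exact fun x hx => (hS₀min T htrans hx).2

/-- the cell transfer map `η` is injective.  Tableaux on a convex set
are identified with their restrictions, so equality of the images on
`Q ∧ R` and `Q ∨ R` forces equality of the arguments on `Q` and `R`. -/
theorem cellTransfer_injective (O : P → P → ℕ+ → WithTop ℤ)
    (hO : ∀ s t : P, s ⋖ t → Monotone (O s t))
    (Q R : Set P) (hQf : Q.Finite) (hRf : R.Finite)
    (hQ : IsConvex Q) (hR : IsConvex R)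
    (ω σ ω' σ' : P → ℕ+)
    (hω : IsTableau O Q ω) (hσ : IsTableau O R σ)
    (hω' : IsTableau O Q ω') (hσ' : IsTableau O R σ')
    (S₀ S₀' : Set P)
    (hS₀ : Transferrable O Q R ω σ S₀)
    (hS₀min : ∀ S : Set P, Transferrable O Q R ω σ S → S₀ ⊆ S)
    (hS₀' : Transferrable O Q R ω' σ' S₀')
    (hS₀min' : ∀ S : Set P, Transferrable O Q R ω' σ' S → S₀' ⊆ S)
    (hwedge : Set.EqOn (wedgeTab Q R S₀ ω σ) (wedgeTab Q R S₀' ω' σ') (wedgeSet Q R))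
    (hvee : Set.EqOn (veeTab Q R S₀ ω σ) (veeTab Q R S₀' ω' σ') (veeSet Q R)) :
    Set.EqOn ω ω' Q ∧ Set.EqOn σ σ' R := by
  classical
  have h1 : S₀ ⊆ S₀' :=
    key_sub O hO Q R ω σ ω' σ' hω hσ hω' hσ' S₀ S₀' hS₀ hS₀min hS₀' hwedge hvee
  have h2 : S₀' ⊆ S₀ :=
    key_sub O hO Q R ω' σ' ω σ hω' hσ' hω hσ S₀' S₀ hS₀' hS₀min' hS₀ hwedge.symm hvee.symm
  have hss : S₀' = S₀ := subset_antisymm h2 h1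
  rw [hss] at hwedge hvee
  have hSp : ∀ x ∈ S₀, x ∈ Q ∩ R ∧ ω x < σ x := fun x hx => sStar_sub_plus (hS₀.1 hx)
  have hwEq : ∀ x ∈ wedgeSet Q R,
      (if x ∈ R \ Q ∪ S₀ then σ x else ω x) = (if x ∈ R \ Q ∪ S₀ then σ' x else ω' x) :=
    fun x hx => hwedge hx
  have hvEq : ∀ x ∈ veeSet Q R,
      (if x ∈ Q \ R ∪ S₀ then ω x else σ x) = (if x ∈ Q \ R ∪ S₀ then ω' x else σ' x) :=
    fun x hx => hvee hx
  constructor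
  · intro x hxQ
    by_cases hxR : x ∈ R
    · by_cases hxS : x ∈ S₀
      · have h := hvEq x (mem_vee_of_inter ⟨hxQ, hxR⟩)
        have hp : x ∈ Q \ R ∪ S₀ := Or.inr hxS
        rw [if_pos hp, if_pos hp] at h
        exact h
      · have h := hwEq x (mem_wedge_of_inter ⟨hxQ, hxR⟩)
        have hc : x ∉ R \ Q ∪ S₀ := by
          rintro (h' | h')
          · exact h'.2 hxQ
          · exact hxS h'
        rw [if_neg hc, if_neg hc] at h
        exact h
    · -- x ∈ Q \ R
      have hxS : x ∉ S₀ := fun h => hxR ((hSp x h).1).2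
      by_cases hgt : ∃ t ∈ R, t < x
      · have h := hvEq x (Or.inl ⟨hxQ, hxR, hgt⟩)
        have h1 : x ∈ Q \ R ∪ S₀ := Or.inl ⟨hxQ, hxR⟩
        rw [if_pos h1, if_pos h1] at h
        exact h
      · have hc : x ∉ R \ Q ∪ S₀ := by
          rintro (h' | h')
          · exact hxR h'.1
          · exact hxS h'
        by_cases hlt : ∃ t ∈ R, x < t
        · have h := hwEq x (Or.inr ⟨hxQ, Or.inr ⟨hxR, hlt⟩⟩)
          rw [if_neg hc, if_neg hc] at h
          exact h
        · have hsim : simSet x R := by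
            refine Or.inr (fun t htR => ⟨fun hle => hlt ⟨t, htR, ?_⟩, fun hle => hgt ⟨t, htR, ?_⟩⟩)
            · exact lt_of_le_of_ne hle (fun he => hxR (he ▸ htR))
            · exact lt_of_le_of_ne hle (fun he => hxR (he.symm ▸ htR))
          have h := hwEq x (Or.inr ⟨hxQ, Or.inl hsim⟩)
          rw [if_neg hc, if_neg hc] at h
          exact h
  · intro x hxR
    by_cases hxQ : x ∈ Q
    · by_cases hxS : x ∈ S₀
      · have h := hwEq x (mem_wedge_of_inter ⟨hxQ, hxR⟩)
        have hp : x ∈ R \ Q ∪ S₀ := Or.inr hxS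
        rw [if_pos hp, if_pos hp] at h
        exact h
      · have h := hvEq x (mem_vee_of_inter ⟨hxQ, hxR⟩)
        have hc : x ∉ Q \ R ∪ S₀ := by
          rintro (h' | h')
          · exact h'.2 hxR
          · exact hxS h'
        rw [if_neg hc, if_neg hc] at h
        exact h
    · -- x ∈ R \ Q
      have hxS : x ∉ S₀ := fun h => hxQ ((hSp x h).1).1
      by_cases hlt : ∃ t ∈ Q, x < t
      · have h := hwEq x (Or.inl ⟨hxR, hxQ, hlt⟩)
        have h1 : x ∈ R \ Q ∪ S₀ := Or.inl ⟨hxR, hxQ⟩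
        rw [if_pos h1, if_pos h1] at h
        exact h
      · have hc : x ∉ Q \ R ∪ S₀ := by
          rintro (h' | h')
          · exact hxQ h'.1
          · exact hxS h'
        by_cases hgt : ∃ t ∈ Q, t < x
        · have h := hvEq x (Or.inr ⟨hxR, Or.inr ⟨hxQ, hgt⟩⟩)
          rw [if_neg hc, if_neg hc] at h
          exact h
        · have hsim : simSet x Q := by
            refine Or.inr (fun t htQ => ⟨fun hle => hlt ⟨t, htQ, ?_⟩, fun hle => hgt ⟨t, htQ, ?_⟩⟩)
            · exact lt_of_le_of_ne hle (fun he => hxQ (he ▸ htQ))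
            · exact lt_of_le_of_ne hle (fun he => hxQ (he.symm ▸ htQ))
          have h := hvEq x (Or.inr ⟨hxR, Or.inl hsim⟩)
          rw [if_neg hc, if_neg hc] at h
          exact h
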